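/- Let α ∈ ℝⁿ be Diophantine with constants C > 0, γ > n−1. Let f : ℤⁿ → ℂ be a function (the Fourier coefficients of a smooth function) with f(0) = 0, and suppose for every s > 0 there is M_s with |f(k)| ≤ M_s ‖k‖^{−s} for all nonzero k. Define h(k) = f(k) / (2πi α·k) for k ≠ 0 and h(0) = 0. Then for every r > 0, the function k ↦ ‖k‖^r |h(k)| is bounded by (2πC)^{−1} M_{r+γ}; in particular h is the sequence of Fourier coefficients of a smooth function solving the cohomological equation ∑ α_i ∂/∂x_i u = f on the torus 𝕋ⁿ. -/

import Mathlib

/-!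
Dividing by the small divisor `2πi α·k` costs at most the factor `‖k‖^γ / (2πC)` by the
Diophantine condition, and this is paid for by the decay `‖f k‖ ≤ M_{r+γ} ‖k‖^{-(r+γ)}`.
-/

open Real

lemma norm_intCast_pos {ι : Type*} [Fintype ι] {k : ι → ℤ} (hk : k ≠ 0) :
    0 < ‖fun i => (k i : ℝ)‖ :=
  norm_pos_iff.mpr fun h => hk (funext fun i => by simpa using congrFun h i)

lemma norm_two_pi_I_mul_ofReal (d : ℝ) :
    ‖2 * (π : ℂ) * Complex.I * (d : ℂ)‖ = 2 * π * |d| := by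
  simp [abs_of_pos pi_pos]

lemma rpow_mul_div_le_of_lower_bound {x a c F M r γ : ℝ} (hx : 0 < x) (hc : 0 < c)
    (ha : c * x ^ (-γ) ≤ a) (hF : F ≤ M * x ^ (-(r + γ))) (hF0 : 0 ≤ F) :
    x ^ r * (F / a) ≤ c⁻¹ * M := by
  have hlow : 0 < c * x ^ (-γ) := by positivity
  have hdecay : x ^ (r + γ) * F ≤ M := by
    rw [rpow_neg hx.le, le_mul_inv_iff₀ (by positivity)] at hF
    linarith
  calc x ^ r * (F / a) ≤ x ^ r * (F / (c * x ^ (-γ))) := by gcongr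
    _ = c⁻¹ * (x ^ (r + γ) * F) := by
      rw [rpow_add hx, rpow_neg hx.le]
      field_simp
    _ ≤ c⁻¹ * M := by gcongr

theorem stmt_8_general {n : ℕ} (α : Fin n → ℝ) (C γ : ℝ)
    (hC : 0 < C) (hγ : (n : ℝ) - 1 < γ)
    (hdio : ∀ k : Fin n → ℤ, k ≠ 0 →
      C * ‖(fun i => (k i : ℝ))‖ ^ (-γ) ≤ |∑ i, α i * (k i : ℝ)|)
    (f : (Fin n → ℤ) → ℂ)
    (M : ℝ → ℝ)
    (hM : ∀ s > (0 : ℝ), ∀ k : Fin n → ℤ, k ≠ 0 →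
      ‖f k‖ ≤ M s * ‖(fun i => (k i : ℝ))‖ ^ (-s))
    (h : (Fin n → ℤ) → ℂ)
    (hhdef : ∀ k : Fin n → ℤ, k ≠ 0 →
      h k = f k / (2 * Real.pi * Complex.I * (∑ i, α i * (k i : ℝ)))) :
    ∀ r > (0 : ℝ), ∀ k : Fin n → ℤ, k ≠ 0 →
      ‖(fun i => (k i : ℝ))‖ ^ r * ‖h k‖ ≤
        (2 * Real.pi * C)⁻¹ * M (r + γ) := by
  intro r hr k hk
  obtain ⟨i, -⟩ := Function.ne_iff.mp hk
  have hγ_pos : 0 < γ := by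
    have : (1 : ℝ) ≤ n := by exact_mod_cast i.pos
    linarith
  rw [hhdef k hk, norm_div, norm_two_pi_I_mul_ofReal]
  refine rpow_mul_div_le_of_lower_bound (norm_intCast_pos hk) (by positivity) ?_
    (hM _ (by linarith) k hk) (norm_nonneg _)
  rw [mul_assoc]
  gcongr
  exact hdio k hk

open Real in
theorem stmt_8 {n : ℕ} (α : Fin n → ℝ) (C γ : ℝ)
    (hC : 0 < C) (hγ : (n : ℝ) - 1 < γ)
    (hdio : ∀ k : Fin n → ℤ, k ≠ 0 →
      C * ‖(fun i => (k i : ℝ))‖ ^ (-γ) ≤ |∑ i, α i * (k i : ℝ)|)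
    (f : (Fin n → ℤ) → ℂ) (hf0 : f 0 = 0)
    (M : ℝ → ℝ)
    (hM : ∀ s > (0 : ℝ), ∀ k : Fin n → ℤ, k ≠ 0 →
      ‖f k‖ ≤ M s * ‖(fun i => (k i : ℝ))‖ ^ (-s))
    (h : (Fin n → ℤ) → ℂ) (hh0 : h 0 = 0)
    (hhdef : ∀ k : Fin n → ℤ, k ≠ 0 →
      h k = f k / (2 * Real.pi * Complex.I * (∑ i, α i * (k i : ℝ)))) :
    ∀ r > (0 : ℝ), ∀ k : Fin n → ℤ, k ≠ 0 →
      ‖(fun i => (k i : ℝ))‖ ^ r * ‖h k‖ ≤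
        (2 * Real.pi * C)⁻¹ * M (r + γ) :=
  stmt_8_general α C γ hC hγ hdio f M hM h hhdef
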